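/- arXiv:2410.14870 — 3 statements merged into one kernel-verified Lean document; each statement's English description precedes it below -/
import Mathlib

section
/- For every t > 0 and x ∈ ℂ, the Gaussian contour integral ∫_{C₀} e^{−i(z−x)²/(4t)} dz, where C₀ is the straight line through i in the direction e^{−iπ/4} (from e^{3iπ/4}∞ to e^{−iπ/4}∞), equals e^{−iπ/4}·2√(πt); in particular the value is independent of x. -/
/-!
The point `i + e^{-iπ/4} s` of `C₀` is `ω (s + w)` with `ω = e^{-iπ/4}` and `w = (i - x)/ω`,
and `-i ω² = -1`, so the integrand becomes the real Gaussian `e^{-(s + w)²/(4t)}` shifted by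
a complex `w`. By Cauchy's theorem a complex shift does not change the Gaussian integral,
which is `√(4πt)`.
-/

open MeasureTheory Complex

theorem integral_cexp_neg_mul_sq_add {b : ℂ} (hb : 0 < b.re) (w : ℂ) :
    ∫ x : ℝ, cexp (-b * (x + w) ^ 2) = (Real.pi / b) ^ (1 / 2 : ℂ) := by
  rw [← GaussianFourier.integral_cexp_neg_mul_sq_add_real_mul_I hb w.im,
    ← integral_add_right_eq_self (fun x : ℝ ↦ cexp (-b * (x + w.im * I) ^ 2)) w.re]
  simp_rw [ofReal_add, add_assoc, re_add_im]

theorem exp_neg_pi_div_four_mul_I_sq : cexp (-(Real.pi / 4) * I) ^ 2 = -I := by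
  rw [← exp_nat_mul, ← exp_neg_pi_div_two_mul_I]
  congr 1
  push_cast
  ring

theorem ofReal_cpow_one_half {r : ℝ} (hr : 0 ≤ r) :
    (r : ℂ) ^ (1 / 2 : ℂ) = Real.sqrt r := by
  rw [Real.sqrt_eq_rpow, ofReal_cpow hr]
  norm_num

/-- The Gaussian contour integral over the line `C₀ = {i + e^{-iπ/4}s : s ∈ ℝ}`
(from `e^{3iπ/4}∞` to `e^{-iπ/4}∞`) of `e^{-i(z-x)²/(4t)}` equals `e^{-iπ/4}·2√(πt)`,
independently of `x ∈ ℂ`. -/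
theorem stmt6 (t : ℝ) (ht : 0 < t) (x : ℂ) :
    (∫ s : ℝ,
        Complex.exp (-Complex.I *
            ((Complex.I + Complex.exp (-(Real.pi / 4) * Complex.I) * s) - x) ^ 2 / (4 * t)) *
          Complex.exp (-(Real.pi / 4) * Complex.I))
      = Complex.exp (-(Real.pi / 4) * Complex.I) * 2 * Real.sqrt (Real.pi * t) := by
  set ω := cexp (-(Real.pi / 4) * I)
  have hω : ω ≠ 0 := exp_ne_zero _
  have ht' : (t : ℂ) ≠ 0 := ofReal_ne_zero.mpr ht.ne'
  have h_integrand (s : ℝ) : -I * ((I + ω * s) - x) ^ 2 / (4 * t)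
      = -(1 / (4 * t) : ℂ) * (s + (I - x) / ω) ^ 2 := by
    have h_point : I + ω * s - x = ω * (s + (I - x) / ω) := by field_simp; ring
    rw [h_point, mul_pow, exp_neg_pi_div_four_mul_I_sq]
    linear_combination (s + (I - x) / ω) ^ 2 / (4 * t) * I_sq
  have hb : 0 < (1 / (4 * t) : ℂ).re := by
    norm_cast
    positivity
  have h_value :
      ((Real.pi : ℂ) / (1 / (4 * t))) ^ (1 / 2 : ℂ) = 2 * Real.sqrt (Real.pi * t) := by
    have h_base : (Real.pi : ℂ) / (1 / (4 * t)) = ((2 ^ 2 * (Real.pi * t) : ℝ) : ℂ) := by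
      push_cast
      field_simp
      norm_num
    rw [h_base, ofReal_cpow_one_half (by positivity), Real.sqrt_mul (by positivity),
      Real.sqrt_sq zero_le_two]
    push_cast
    ring
  simp_rw [h_integrand, integral_mul_const, integral_cexp_neg_mul_sq_add hb, h_value]
  ring
end

section
/- Let t, ε > 0 and x ∈ ℂ, and for a contour C₀ from e^{3iπ/4}∞ to e^{−iπ/4}∞ passing below z = i, define I_P(t,x) := ∫_{C₀} e^{−i(z−x)²/(4t)} (z−i)^{−P} dz for integers P ≥ 0. Then for P ≥ 2 the recursion I_P(t,x) = [i(x−i)/(2(P−1)t)] I_{P−1}(t,x) − [i/(2(P−1)t)] I_{P−2}(t,x) holds. -/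
open MeasureTheory Complex Filter Set

/-- The contour `C₀`: the line through `-i` in the direction `e^{-iπ/4}` (from
`e^{3iπ/4}∞` to `e^{-iπ/4}∞`, passing below `z = i`). -/
noncomputable def c0path (s : ℝ) : ℂ := -Complex.I + Complex.exp (-(Real.pi / 4) * Complex.I) * s

/-- `I_P(t,x) = ∫_{C₀} e^{-i(z-x)²/(4t)} (z-i)^{-P} dz`. -/
noncomputable def Icontour (t : ℝ) (x : ℂ) (P : ℕ) : ℂ :=
  ∫ s : ℝ, Complex.exp (-Complex.I * (c0path s - x) ^ 2 / (4 * t)) *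
      (c0path s - Complex.I) ^ (-(P : ℤ)) * Complex.exp (-(Real.pi / 4) * Complex.I)

/-!
Differentiating `e^{-i(z-x)²/(4t)} (z-i)^{1-P}` along `C₀` and splitting `z - x = (z - i) + (i - x)`
expresses the derivative as a combination of the integrands of `I_{P-2}`, `I_{P-1}` and `I_P`.
Along `C₀` the exponent is `-s²/(4t) + (linear in s)`, so everything is Gaussian-integrable and
`(z - i)^{-n}` stays bounded; hence the integral of the derivative vanishes, which is the recursion.
-/

noncomputable def c0dir : ℂ := cexp (-(Real.pi / 4) * I)

noncomputable def c0Integrand (t : ℝ) (x : ℂ) (m : ℤ) (s : ℝ) : ℂ :=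
  cexp (-I * (c0path s - x) ^ 2 / (4 * t)) * (c0path s - I) ^ m * c0dir

lemma c0path_eq (s : ℝ) : c0path s = -I + c0dir * s := rfl

lemma Icontour_eq_integral_c0Integrand (t : ℝ) (x : ℂ) (P : ℕ) :
    Icontour t x P = ∫ s, c0Integrand t x (-P) s := rfl

lemma c0dir_sq : c0dir ^ 2 = -I := by
  rw [c0dir, ← Complex.exp_nat_mul]
  have h : ((2 : ℕ) : ℂ) * (-(Real.pi / 4) * I) = (↑(-(Real.pi / 2)) : ℂ) * I := by
    push_cast; ring
  rw [h, Complex.exp_mul_I]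
  simp

lemma c0dir_re : c0dir.re = Real.sqrt 2 / 2 := by
  simp [c0dir, exp_re, Real.cos_pi_div_four]

lemma c0dir_im : c0dir.im = -(Real.sqrt 2 / 2) := by
  simp [c0dir, exp_im, Real.sin_pi_div_four]

lemma one_le_norm_c0path_sub_I (s : ℝ) : 1 ≤ ‖c0path s - I‖ := by
  have hsqrt : Real.sqrt 2 ^ 2 = 2 := Real.sq_sqrt (by norm_num)
  have hsq : 1 ≤ normSq (c0path s - I) := by
    simp only [c0path_eq, normSq_apply, sub_re, sub_im, add_re, add_im, mul_re, mul_im,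
      neg_re, neg_im, I_re, I_im, ofReal_re, ofReal_im, c0dir_re, c0dir_im]
    nlinarith [sq_nonneg (s + Real.sqrt 2)]
  nlinarith [Complex.sq_norm (c0path s - I), norm_nonneg (c0path s - I)]

lemma c0path_sub_I_ne_zero (s : ℝ) : c0path s - I ≠ 0 :=
  norm_pos_iff.mp (one_pos.trans_le (one_le_norm_c0path_sub_I s))

lemma hasDerivAt_c0path (s : ℝ) : HasDerivAt c0path c0dir s :=
  ((((hasDerivAt_id (s : ℂ)).const_mul c0dir).const_add (-I)).comp_ofReal).congr_deriv
    (mul_one _)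

/-- `c0dir ^ 2 = -i` makes the quadratic coefficient real and negative. -/
lemma gauss_exponent_c0path (t : ℝ) (x : ℂ) (s : ℝ) :
    -I * (c0path s - x) ^ 2 / (4 * t)
      = -((1 / (4 * t) : ℝ) : ℂ) * s ^ 2 + (-I * c0dir * (-I - x) / (2 * t)) * s
        + (-I * (-I - x) ^ 2 / (4 * t)) := by
  rw [c0path_eq]
  push_cast
  linear_combination (-I * (s : ℂ) ^ 2 / (4 * t)) * c0dir_sq + ((s : ℂ) ^ 2 / (4 * t)) * I_sq

lemma integrable_gauss_c0path {t : ℝ} (ht : 0 < t) (x : ℂ) :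
    Integrable fun s : ℝ => cexp (-I * (c0path s - x) ^ 2 / (4 * t)) := by
  simp_rw [gauss_exponent_c0path]
  exact integrable_cexp_quadratic (by simp; positivity) _ _

lemma continuous_c0path : Continuous c0path := by
  unfold c0path; fun_prop

lemma integrable_gauss_mul_zpow_c0path {t : ℝ} (ht : 0 < t) (x : ℂ) {m : ℤ} (hm : m ≤ 0) :
    Integrable fun s : ℝ => cexp (-I * (c0path s - x) ^ 2 / (4 * t)) * (c0path s - I) ^ m := by
  refine (integrable_gauss_c0path ht x).mono ?_ (Eventually.of_forall fun s => ?_)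
  · exact (((continuous_const.mul ((continuous_c0path.sub continuous_const).pow 2)).div_const
      _).cexp.mul ((continuous_c0path.sub continuous_const).zpow₀ m
        fun s => Or.inl (c0path_sub_I_ne_zero s))).aestronglyMeasurable
  · rw [norm_mul, norm_zpow]
    exact mul_le_of_le_one_right (norm_nonneg _)
      (zpow_le_one_of_nonpos₀ (one_le_norm_c0path_sub_I s) hm)

lemma integrable_c0Integrand {t : ℝ} (ht : 0 < t) (x : ℂ) {m : ℤ} (hm : m ≤ 0) :
    Integrable (c0Integrand t x m) :=
  (integrable_gauss_mul_zpow_c0path ht x hm).mul_const c0dir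

/-- The derivative, with `z - x` split as `(z - i) + (i - x)`. -/
lemma hasDerivAt_gauss_mul_zpow (t : ℝ) (x : ℂ) (m : ℤ) {z : ℂ} (hz : z - I ≠ 0) :
    HasDerivAt (fun z => cexp (-I * (z - x) ^ 2 / (4 * t)) * (z - I) ^ m)
      (cexp (-I * (z - x) ^ 2 / (4 * t)) *
        (-I / (2 * t) * (z - I) ^ (m + 1) + I * (x - I) / (2 * t) * (z - I) ^ m
          + m * (z - I) ^ (m - 1))) z := by
  have hexp : HasDerivAt (fun z => -I * (z - x) ^ 2 / (4 * t)) (-I * (2 * (z - x)) / (4 * t)) z :=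
    by simpa using (((hasDerivAt_id z).sub_const x).pow 2).const_mul (-I) |>.div_const (4 * t)
  have hzpow : HasDerivAt (fun z => (z - I) ^ m) (m * (z - I) ^ (m - 1)) z :=
    (hasDerivAt_zpow m (z - I) (Or.inl hz)).comp_sub_const z I
  refine (hexp.cexp.mul hzpow).congr_deriv ?_
  rw [zpow_add_one₀ hz]
  ring

lemma hasDerivAt_gauss_mul_zpow_c0path (t : ℝ) (x : ℂ) (m : ℤ) (s : ℝ) :
    HasDerivAt (fun s : ℝ => cexp (-I * (c0path s - x) ^ 2 / (4 * t)) * (c0path s - I) ^ m)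
      (-I / (2 * t) * c0Integrand t x (m + 1) s + I * (x - I) / (2 * t) * c0Integrand t x m s
        + m * c0Integrand t x (m - 1) s) s := by
  refine ((hasDerivAt_gauss_mul_zpow t x m (c0path_sub_I_ne_zero s)).comp s
    (hasDerivAt_c0path s)).congr_deriv ?_
  simp only [c0Integrand]
  ring

lemma integral_c0Integrand_relation {t : ℝ} (ht : 0 < t) (x : ℂ) {m : ℤ} (hm : m + 1 ≤ 0) :
    -I / (2 * t) * (∫ s, c0Integrand t x (m + 1) s)
      + I * (x - I) / (2 * t) * (∫ s, c0Integrand t x m s)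
      + m * (∫ s, c0Integrand t x (m - 1) s) = 0 := by
  have hp := (integrable_c0Integrand ht x hm).const_mul (-I / (2 * t))
  have h0 := (integrable_c0Integrand ht x (m := m) (by omega)).const_mul (I * (x - I) / (2 * t))
  have hn := (integrable_c0Integrand ht x (m := m - 1) (by omega)).const_mul (m : ℂ)
  have hpz : Integrable fun s => -I / (2 * t) * c0Integrand t x (m + 1) s
      + I * (x - I) / (2 * t) * c0Integrand t x m s := hp.add h0
  have h := integral_eq_zero_of_hasDerivAt_of_integrable (hasDerivAt_gauss_mul_zpow_c0path t x m)
    (hpz.add hn) (integrable_gauss_mul_zpow_c0path ht x (by omega))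
  rwa [integral_add hpz hn, integral_add hp h0, integral_const_mul, integral_const_mul,
    integral_const_mul] at h

lemma Icontour_relation {t : ℝ} (ht : 0 < t) (x : ℂ) (n : ℕ) :
    2 * (n + 1) * t * Icontour t x (n + 2)
      = I * ((x - I) * Icontour t x (n + 1) - Icontour t x n) := by
  have h := integral_c0Integrand_relation ht x (m := -((n + 1 : ℕ) : ℤ)) (by omega)
  rw [show -((n + 1 : ℕ) : ℤ) + 1 = -(n : ℤ) by push_cast; ring,
    show -((n + 1 : ℕ) : ℤ) - 1 = -((n + 2 : ℕ) : ℤ) by push_cast; ring] at h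
  rw [← Icontour_eq_integral_c0Integrand, ← Icontour_eq_integral_c0Integrand,
    ← Icontour_eq_integral_c0Integrand] at h
  have ht' : (t : ℂ) ≠ 0 := by exact_mod_cast ht.ne'
  push_cast at h
  field_simp at h
  linear_combination -h

theorem stmt13_general (t : ℝ) (ht : 0 < t) (x : ℂ) (P : ℕ) (hP : 2 ≤ P) :
    Icontour t x P
      = (Complex.I * (x - Complex.I) / (2 * ((P : ℂ) - 1) * t)) * Icontour t x (P - 1)
        - (Complex.I / (2 * ((P : ℂ) - 1) * t)) * Icontour t x (P - 2) := by
  obtain ⟨n, rfl⟩ := Nat.exists_eq_add_of_le' hP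
  have hrel := Icontour_relation ht x n
  have ht' : (t : ℂ) ≠ 0 := by exact_mod_cast ht.ne'
  have hn : (n : ℂ) + 1 ≠ 0 := by exact_mod_cast n.succ_ne_zero
  simp only [Nat.add_sub_cancel, Nat.add_succ_sub_one, Nat.cast_add, Nat.cast_ofNat]
  rw [show (n : ℂ) + 2 - 1 = n + 1 by ring]
  field_simp
  linear_combination hrel

/-- The integration-by-parts recursion
`I_P = [i(x-i)/(2(P-1)t)] I_{P-1} - [i/(2(P-1)t)] I_{P-2}` for `P ≥ 2`. -/
theorem stmt13 (t ε : ℝ) (ht : 0 < t) (hε : 0 < ε) (x : ℂ) (P : ℕ) (hP : 2 ≤ P) :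
    Icontour t x P
      = (Complex.I * (x - Complex.I) / (2 * ((P : ℂ) - 1) * t)) * Icontour t x (P - 1)
        - (Complex.I / (2 * ((P : ℂ) - 1) * t)) * Icontour t x (P - 2) :=
  stmt13_general t ht x P hP
end

section
/- Fix t, ε > 0, points p₁,…,p_N in the upper half-plane, and a smooth family of (N+1)×(N+1) complex matrices B(x) and A(x) (x ∈ ℝ) which agree except in the first column, and such that ε ∂ₓ B_{j1}(x) = −i A_{j1}(x) and ε ∂ₓ B_{jk}(x) = (i/(2t)) B_{j1}(x) + (i(p_{k−1}−x)/(2t)) B_{jk}(x) for all j and all k ≥ 2. Then ε ∂ₓ det B(x) = −i det A(x) + (i/(2t)) (Σ_{k=2}^{N+1}(p_{k−1}−x)) det B(x); consequently, wherever det B(x) ≠ 0, det A(x)/det B(x) = iε ∂ₓ log(det B̄(x)) where B̄ is obtained from B by multiplying column k (k ≥ 2) by e^{i(x−p_{k−1})²/(4tε)}. -/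
/-!
Differentiate `det B` column by column. Column `0` of `B'` is `-(i/ε)` times column `0` of `A`,
and the other columns of `B` are those of `A`, so it contributes `-(i/ε) det A`. Column `k ≠ 0`
of `B'` is a combination of columns `0` and `k` of `B`; the first part gives a determinant with two
proportional columns, so it contributes `i(p_k - x)/(2tε) det B`. The gauge factors multiply
`det B` by `exp φ` with `φ' = -(i/(2tε)) Σ (p_k - x)`, so in the logarithmic derivative of
`det B̄ = exp φ · det B` the term `φ'` cancels the `Σ (p_k - x)` term of `(det B)'/det B`.
-/

open Complex Matrix Finset

section DetDeriv

variable {𝕜 : Type*} [NontriviallyNormedField 𝕜] {R : Type*} [NormedCommRing R]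
  [NormedAlgebra 𝕜 R] {n : Type*} [Fintype n] [DecidableEq n]

theorem hasDerivAt_det {M : 𝕜 → Matrix n n R} {M' : Matrix n n R} {x : 𝕜}
    (h : ∀ i j, HasDerivAt (fun y => M y i j) (M' i j) x) :
    HasDerivAt (fun y => (M y).det) (∑ j, ((M x).updateCol j fun i => M' i j).det) x := by
  have hterm (σ : Equiv.Perm n) : HasDerivAt (fun y => Equiv.Perm.sign σ • ∏ j, M y (σ j) j)
      (Equiv.Perm.sign σ • ∑ j, (∏ k ∈ univ.erase j, M x (σ k) k) • M' (σ j) j) x :=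
    (HasDerivAt.fun_finsetProd fun j _ => h (σ j) j).const_smul _
  have hcol (j : n) : ((M x).updateCol j fun i => M' i j).det
      = ∑ σ : Equiv.Perm n, Equiv.Perm.sign σ • (∏ k ∈ univ.erase j, M x (σ k) k) • M' (σ j) j := by
    rw [det_apply]
    refine sum_congr rfl fun σ _ => ?_
    rw [← mul_prod_erase _ _ (mem_univ j), updateCol_self, smul_eq_mul, mul_comm,
      prod_congr rfl fun k hk => updateCol_ne (ne_of_mem_erase hk)]
  rw [show (fun y => (M y).det) = _ from funext fun y => det_apply (M y)]
  refine (HasDerivAt.fun_sum (u := univ) fun σ _ => hterm σ).congr_deriv ?_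
  simp only [hcol, smul_sum]
  exact sum_comm

theorem hasDerivAt_det_of_hasDerivAt_col {M : 𝕜 → Matrix n n R} {x : 𝕜} {j₀ : n}
    {v c d : n → R} (h₀ : ∀ i, HasDerivAt (fun y => M y i j₀) (v i) x)
    (h : ∀ i j, j ≠ j₀ → HasDerivAt (fun y => M y i j) (c j * M x i j₀ + d j * M x i j) x) :
    HasDerivAt (fun y => (M y).det)
      (((M x).updateCol j₀ v).det + (∑ j ∈ univ.erase j₀, d j) * (M x).det) x := by
  have hM := hasDerivAt_det (M' := of fun i j => if j = j₀ then v i else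
      c j * M x i j₀ + d j * M x i j) fun i j => by
    by_cases hj : j = j₀
    · subst hj; simpa using h₀ i
    · simpa [hj] using h i j hj
  have hcol (j : n) (hj : j ≠ j₀) :
      ((M x).updateCol j (c j • (fun i => M x i j₀) + d j • fun i => M x i j)).det
        = d j * (M x).det := by
    rw [det_updateCol_add, det_updateCol_smul, det_updateCol_smul,
      det_updateCol_eq_zero hj.symm, updateCol_eq_self, mul_zero, zero_add]
  refine hM.congr_deriv ?_
  rw [← add_sum_erase _ _ (mem_univ j₀), sum_mul]
  congr 1
  · simp
  · refine sum_congr rfl fun j hj => ?_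
    rw [← hcol j (ne_of_mem_erase hj)]
    simp only [of_apply, if_neg (ne_of_mem_erase hj)]
    rfl

end DetDeriv

theorem updateCol_eq_of_forall_ne {R : Type*} {n : Type*} [DecidableEq n] {A B : Matrix n n R}
    {j₀ : n} (h : ∀ i j, j ≠ j₀ → A i j = B i j) : B.updateCol j₀ (fun i => A i j₀) = A := by
  ext i j
  rcases eq_or_ne j j₀ with rfl | hj
  · simp
  · simp [updateCol_ne hj, h i j hj]

theorem det_of_ite_eq_mul_col {R : Type*} [CommRing R] {n : Type*} [Fintype n] [DecidableEq n]
    (M : Matrix n n R) (j₀ : n) (f : n → R) :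
    (of fun i j => if j = j₀ then M i j else f j * M i j).det
      = (∏ j ∈ univ.erase j₀, f j) * M.det := by
  have hM : (of fun i j => if j = j₀ then M i j else f j * M i j)
      = of fun i j => Function.update f j₀ 1 j * M i j := by
    ext i j
    by_cases hj : j = j₀ <;> simp [hj]
  rw [hM, det_mul_row, prod_update_of_mem (mem_univ j₀), one_mul, sdiff_singleton_eq_erase]

theorem HasDerivAt.logDeriv_cexp {𝕜 : Type*} [NontriviallyNormedField 𝕜] [NormedAlgebra 𝕜 ℂ]
    {f : 𝕜 → ℂ} {f' : ℂ} {x : 𝕜} (hf : HasDerivAt f f' x) :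
    logDeriv (fun y => Complex.exp (f y)) x = f' := by
  rw [logDeriv_apply, hf.cexp.deriv, mul_div_cancel_left₀ _ (exp_ne_zero _)]

theorem hasDerivAt_sum_mul_sub_sq_div {ι : Type*} (s : Finset ι) (p : ι → ℂ) (a c : ℂ) (x : ℝ) :
    HasDerivAt (fun y : ℝ => ∑ k ∈ s, a * ((y : ℂ) - p k) ^ 2 / c)
      (-(2 * a / c) * ∑ k ∈ s, (p k - x)) x := by
  refine (HasDerivAt.fun_sum fun k _ =>
    ((((hasDerivAt_id x).ofReal_comp.sub_const (p k)).pow 2).const_mul a).div_const c).congr_deriv ?_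
  rw [mul_sum]
  refine sum_congr rfl fun k _ => ?_
  push_cast [id]
  ring

theorem stmt15_general (N : ℕ) (t ε : ℝ) (hε : 0 < ε)
    (p : Fin (N + 1) → ℂ)
    (A B : ℝ → Matrix (Fin (N + 1)) (Fin (N + 1)) ℂ)
    (hBd : ∀ j k, Differentiable ℝ (fun x : ℝ => B x j k))
    (hAB : ∀ (x : ℝ) (j k : Fin (N + 1)), k ≠ 0 → A x j k = B x j k)
    (h1 : ∀ (x : ℝ) (j : Fin (N + 1)),
      (ε : ℂ) * deriv (fun x' : ℝ => B x' j 0) x = -Complex.I * A x j 0)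
    (h2 : ∀ (x : ℝ) (j k : Fin (N + 1)), k ≠ 0 →
      (ε : ℂ) * deriv (fun x' : ℝ => B x' j k) x
        = (Complex.I / (2 * t)) * B x j 0 + (Complex.I * (p k - x) / (2 * t)) * B x j k) :
    (∀ x : ℝ,
      (ε : ℂ) * deriv (fun x' : ℝ => (B x').det) x
        = -Complex.I * (A x).det
          + (Complex.I / (2 * t)) * (∑ k ∈ Finset.univ.filter (fun k : Fin (N + 1) => k ≠ 0),
              (p k - (x : ℂ))) * (B x).det) ∧
    ∀ x : ℝ, (B x).det ≠ 0 →
      (A x).det / (B x).det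
        = Complex.I * ε *
            deriv (fun x' : ℝ =>
              (Matrix.of fun j k : Fin (N + 1) =>
                if k = 0 then B x' j k
                else Complex.exp (Complex.I * ((x' : ℂ) - p k) ^ 2 / (4 * t * ε)) * B x' j k).det) x /
            (Matrix.of fun j k : Fin (N + 1) =>
              if k = 0 then B x j k
              else Complex.exp (Complex.I * ((x : ℂ) - p k) ^ 2 / (4 * t * ε)) * B x j k).det := by
  have hε₀ : (ε : ℂ) ≠ 0 := by exact_mod_cast hε.ne'
  simp only [filter_ne', det_of_ite_eq_mul_col, ← Complex.exp_sum]
  have hB (x : ℝ) (j k : Fin (N + 1)) :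
      HasDerivAt (fun y => B y j k) ((ε : ℂ)⁻¹ * (ε * deriv (fun y => B y j k) x)) x := by
    rw [inv_mul_cancel_left₀ hε₀]
    exact (hBd j k x).hasDerivAt
  have hdet (x : ℝ) : HasDerivAt (fun y => (B y).det) ((ε : ℂ)⁻¹ *
      (-I * (A x).det + I / (2 * t) * (∑ k ∈ univ.erase 0, (p k - x)) * (B x).det)) x := by
    refine (hasDerivAt_det_of_hasDerivAt_col (j₀ := 0) (v := ((ε : ℂ)⁻¹ * -I) • fun j => A x j 0)
      (c := fun _ => (ε : ℂ)⁻¹ * (I / (2 * t))) (d := fun k => (ε : ℂ)⁻¹ * (I * (p k - x) / (2 * t)))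
      (fun j => by simpa [h1, mul_assoc] using hB x j 0)
      (fun j k hk => by simpa [h2 x j k hk, mul_add, mul_assoc] using hB x j k)).congr_deriv ?_
    simp_rw [det_updateCol_smul, updateCol_eq_of_forall_ne (hAB x), mul_div_right_comm I,
      ← mul_sum]
    ring
  refine ⟨fun x => by rw [(hdet x).deriv, mul_inv_cancel_left₀ hε₀], fun x hBx => ?_⟩
  have hphase := hasDerivAt_sum_mul_sub_sq_div (univ.erase 0) p I (4 * t * ε) x
  rw [mul_div_assoc, ← logDeriv_apply, logDeriv_mul x (exp_ne_zero _) hBx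
    hphase.cexp.differentiableAt (hdet x).differentiableAt, hphase.logDeriv_cexp, logDeriv_apply,
    (hdet x).deriv]
  field_simp
  rw [I_sq]
  ring

/-- Determinantal identity for the `x`-derivative of `det B`, and the resulting
logarithmic-derivative formula `det A/det B = iε ∂ₓ log det B̄`, where `B̄` is
obtained from `B` by multiplying column `k ≠ 0` by `e^{i(x-p_k)²/(4tε)}`. -/
theorem stmt15 (N : ℕ) (t ε : ℝ) (ht : 0 < t) (hε : 0 < ε)
    (p : Fin (N + 1) → ℂ) (hp : ∀ k, 0 < (p k).im)
    (A B : ℝ → Matrix (Fin (N + 1)) (Fin (N + 1)) ℂ)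
    (hAd : ∀ j k, Differentiable ℝ (fun x : ℝ => A x j k))
    (hBd : ∀ j k, Differentiable ℝ (fun x : ℝ => B x j k))
    (hAB : ∀ (x : ℝ) (j k : Fin (N + 1)), k ≠ 0 → A x j k = B x j k)
    (h1 : ∀ (x : ℝ) (j : Fin (N + 1)),
      (ε : ℂ) * deriv (fun x' : ℝ => B x' j 0) x = -Complex.I * A x j 0)
    (h2 : ∀ (x : ℝ) (j k : Fin (N + 1)), k ≠ 0 →
      (ε : ℂ) * deriv (fun x' : ℝ => B x' j k) x
        = (Complex.I / (2 * t)) * B x j 0 + (Complex.I * (p k - x) / (2 * t)) * B x j k) :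
    (∀ x : ℝ,
      (ε : ℂ) * deriv (fun x' : ℝ => (B x').det) x
        = -Complex.I * (A x).det
          + (Complex.I / (2 * t)) * (∑ k ∈ Finset.univ.filter (fun k : Fin (N + 1) => k ≠ 0),
              (p k - (x : ℂ))) * (B x).det) ∧
    ∀ x : ℝ, (B x).det ≠ 0 →
      (A x).det / (B x).det
        = Complex.I * ε *
            deriv (fun x' : ℝ =>
              (Matrix.of fun j k : Fin (N + 1) =>
                if k = 0 then B x' j k
                else Complex.exp (Complex.I * ((x' : ℂ) - p k) ^ 2 / (4 * t * ε)) * B x' j k).det) x /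
            (Matrix.of fun j k : Fin (N + 1) =>
              if k = 0 then B x j k
              else Complex.exp (Complex.I * ((x : ℂ) - p k) ^ 2 / (4 * t * ε)) * B x j k).det :=
  stmt15_general N t ε hε p A B hBd hAB h1 h2
end
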